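/- arXiv:2507.01263 — 3 statements merged into one kernel-verified Lean document; each statement's English description precedes it below -/
import Mathlib

section
/- If Γ is a torsion-free subgroup of finite index n in a group Π, then for every finite subgroup F of Π, the order of F divides n. -/
/-!
A finite subgroup `F` acts freely on the cosets `Π ⧸ Γ`: the stabilizer of `gΓ` is
`F ∩ gΓg⁻¹`, a finite subgroup of a conjugate of the torsion-free group `Γ`, hence trivial.
A free action partitions `Π ⧸ Γ` into orbits of size `|F|`, so `|F|` divides `[Π : Γ]`.
-/

theorem MulAction.card_dvd_card_of_stabilizer_eq_bot {G X : Type*} [Group G] [MulAction G X]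
    (h : ∀ x : X, stabilizer G x = ⊥) : Nat.card G ∣ Nat.card X := by
  rw [Nat.card_congr (selfEquivOrbitsQuotientProd h), Nat.card_prod]
  exact dvd_mul_left _ _

theorem QuotientGroup.eq_one_of_smul_eq_of_isOfFinOrder {G : Type*} [Group G] {Γ : Subgroup G}
    (htf : ∀ x ∈ Γ, IsOfFinOrder x → x = 1) {f : G} (hf : IsOfFinOrder f) {q : G ⧸ Γ}
    (hq : f • q = q) : f = 1 := by
  induction q using QuotientGroup.induction_on with | H g => ?_
  have hconj_mem : g⁻¹ * f * g ∈ Γ := by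
    rw [mul_assoc, ← QuotientGroup.eq]
    exact hq.symm
  have hconj_fin : IsOfFinOrder (g⁻¹ * f * g) :=
    IsConj.isOfFinOrder (isConj_iff.mpr ⟨g⁻¹, by rw [inv_inv]⟩) hf
  simpa [mul_assoc, inv_mul_eq_one] using htf _ hconj_mem hconj_fin

theorem stmt_1_general {Pgrp : Type*} [Group Pgrp] (Γ : Subgroup Pgrp) (n : ℕ) (hn : Γ.index = n)
    (htf : ∀ x ∈ Γ, IsOfFinOrder x → x = 1)
    (F : Subgroup Pgrp) (hF : Finite F) :
    Nat.card F ∣ n := by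
  have hfree : ∀ q : Pgrp ⧸ Γ, MulAction.stabilizer F q = ⊥ := fun q =>
    (Subgroup.eq_bot_iff_forall _).mpr fun f hf => Subtype.ext <|
      QuotientGroup.eq_one_of_smul_eq_of_isOfFinOrder htf
        (Submonoid.isOfFinOrder_coe.mpr (isOfFinOrder_of_finite f)) hf
  rw [← hn]
  exact MulAction.card_dvd_card_of_stabilizer_eq_bot hfree

/-- If `Γ` is a torsion-free subgroup of finite index `n` in `Pgrp`, then the order of
every finite subgroup `F` of `Pgrp` divides `n`. -/
theorem stmt_1 {Pgrp : Type*} [Group Pgrp] (Γ : Subgroup Pgrp) (n : ℕ) (hn : Γ.index = n)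
    (hnpos : 0 < n)
    (htf : ∀ x ∈ Γ, IsOfFinOrder x → x = 1)
    (F : Subgroup Pgrp) (hF : Finite F) :
    Nat.card F ∣ n :=
  stmt_1_general Γ n hn htf F hF
end

section
/- With x, y, z, w ∈ S₂₄ as in the permutation representation σ₂,₁ of the orientable prism group Π̃³³³₂, each of the permutations x, y, z, y⁻¹w, z⁻¹x is a product of eight disjoint 3-cycles; each of w, y⁻¹x, z⁻¹w is a product of twelve disjoint 2-cycles; and z⁻¹y is a product of six disjoint 4-cycles. -/
/-!
Each cycle of a permutation is the orbit of any of its points, so its length is the minimal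
period of those points. Hence if every point has minimal period `n ≥ 2`, all cycles have
length `n`. For the nine concrete permutations the periods are checked by evaluation.
-/

namespace Function

theorem minimalPeriod_eq_of_iterate {α : Type*} {f : α → α} {x : α} {n : ℕ} (hn : 0 < n)
    (hper : f^[n] x = x) (hmin : ∀ k < n, k ≠ 0 → f^[k] x ≠ x) : minimalPeriod f x = n := by
  refine le_antisymm (IsPeriodicPt.minimalPeriod_le hn hper) (not_lt.mp fun hlt => ?_)
  exact hmin _ hlt (IsPeriodicPt.minimalPeriod_pos hn hper).ne' (isPeriodicPt_minimalPeriod f x)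

/-- `Equiv.ofBijective` with the inverse computed by `Fintype.bijInv`, so that the kernel can
evaluate it. -/
def Bijective.perm {α : Type*} [Fintype α] [DecidableEq α] {f : α → α} (hf : f.Bijective) :
    Equiv.Perm α :=
  ⟨f, Fintype.bijInv hf, Fintype.leftInverse_bijInv hf, Fintype.rightInverse_bijInv hf⟩

end Function

open Finset Function

namespace Equiv.Perm

variable {α : Type*} [Fintype α] [DecidableEq α]

theorem card_support_eq_of_mem_cycleFactorsFinset {σ c : Perm α} {n : ℕ}
    (hσ : ∀ a, minimalPeriod σ a = n) (hc : c ∈ σ.cycleFactorsFinset) : #c.support = n := by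
  have hcycle := (mem_cycleFactorsFinset_iff.mp hc).1
  obtain ⟨a, ha⟩ := hcycle.nonempty_support
  have hpow (k : ℕ) : (c ^ k) a = (σ ^ k) a := by
    rw [cycle_is_cycleOf ha hc, cycleOf_pow_apply_self]
  rw [← hcycle.orderOf]
  apply le_antisymm
  · refine orderOf_le_of_pow_eq_one ?_ ((hcycle.pow_eq_one_iff' (mem_support.mp ha)).mpr ?_)
    · exact hσ a ▸ minimalPeriod_pos_of_mem_periodicPts (σ.injective.mem_periodicPts a)
    · rw [hpow, coe_pow, ← hσ a]
      exact isPeriodicPt_minimalPeriod σ a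
  · rw [← hσ a]
    refine IsPeriodicPt.minimalPeriod_le (orderOf_pos c) ?_
    rw [IsPeriodicPt, IsFixedPt, ← coe_pow, ← hpow, pow_orderOf_eq_one, one_apply]

theorem cycleType_eq_replicate_of_minimalPeriod_eq {σ : Perm α} {n : ℕ} (hn : 2 ≤ n)
    (hσ : ∀ a, minimalPeriod σ a = n) : σ.cycleType = .replicate (Fintype.card α / n) n := by
  have hrep : σ.cycleType = .replicate (Multiset.card σ.cycleType) n := by
    refine Multiset.eq_replicate_card.mpr fun m hm => ?_
    obtain ⟨c, hc, rfl⟩ := Multiset.mem_map.mp hm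
    exact card_support_eq_of_mem_cycleFactorsFinset hσ hc
  have hsupp : σ.support = univ := by
    refine eq_univ_of_forall fun a => mem_support.mpr fun ha => ?_
    have := minimalPeriod_eq_one_iff_isFixedPt.mpr ha
    rw [hσ] at this
    omega
  have hsum : Multiset.card σ.cycleType * n = Fintype.card α := by
    rw [← card_univ, ← hsupp, ← sum_cycleType]
    nth_rw 2 [hrep]
    rw [Multiset.sum_replicate, smul_eq_mul]
  rw [hrep, ← hsum, Nat.mul_div_cancel _ (by omega)]

theorem cycleType_eq_replicate_of_iterate {σ : Perm α} {k n : ℕ} (hcard : Fintype.card α = k * n)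
    (hn : 2 ≤ n) (hper : ∀ a, σ^[n] a = a) (hmin : ∀ a, ∀ j < n, j ≠ 0 → σ^[j] a ≠ a) :
    σ.cycleType = .replicate k n := by
  rw [cycleType_eq_replicate_of_minimalPeriod_eq hn fun a =>
      minimalPeriod_eq_of_iterate (by omega) (hper a) (hmin a),
    hcard, Nat.mul_div_cancel _ (by omega)]

end Equiv.Perm

/-- For the permutations `x, y, z, w ∈ S₂₄` of the permutation representation `σ₂,₁`:
`x, y, z, y⁻¹w, z⁻¹x` are each a product of eight disjoint 3-cycles; `w, y⁻¹x, z⁻¹w` are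
each a product of twelve disjoint 2-cycles; and `z⁻¹y` is a product of six disjoint
4-cycles. -/
theorem stmt_14 (x y z w : Equiv.Perm (Fin 24))
    (hx : ∀ i, x i =
      ![1,2,0,12,10,19,18,3,20,8,16,6,7,17,13,5,4,14,11,15,9,22,23,21] i)
    (hy : ∀ i, y i =
      ![3,6,10,4,0,20,7,1,19,14,11,2,18,15,23,22,12,8,16,17,21,5,13,9] i)
    (hz : ∀ i, z i =
      ![2,8,5,13,17,0,22,12,9,1,4,18,23,14,3,19,15,10,20,16,11,6,21,7] i)
    (hw : ∀ i, w i =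
      ![1,0,9,15,18,8,12,22,5,2,20,17,6,16,19,3,13,11,4,14,10,23,7,21] i) :
    x.cycleType = Multiset.replicate 8 3 ∧
    y.cycleType = Multiset.replicate 8 3 ∧
    z.cycleType = Multiset.replicate 8 3 ∧
    (y⁻¹ * w).cycleType = Multiset.replicate 8 3 ∧
    (z⁻¹ * x).cycleType = Multiset.replicate 8 3 ∧
    w.cycleType = Multiset.replicate 12 2 ∧
    (y⁻¹ * x).cycleType = Multiset.replicate 12 2 ∧
    (z⁻¹ * w).cycleType = Multiset.replicate 12 2 ∧
    (z⁻¹ * y).cycleType = Multiset.replicate 6 4 := by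
  obtain rfl : x = Function.Bijective.perm (f := _) (by decide) := Equiv.ext hx
  obtain rfl : y = Function.Bijective.perm (f := _) (by decide) := Equiv.ext hy
  obtain rfl : z = Function.Bijective.perm (f := _) (by decide) := Equiv.ext hz
  obtain rfl : w = Function.Bijective.perm (f := _) (by decide) := Equiv.ext hw
  refine ⟨?_, ?_, ?_, ?_, ?_, ?_, ?_, ?_, ?_⟩ <;>
    exact Equiv.Perm.cycleType_eq_replicate_of_iterate rfl (by norm_num) (by decide) (by decide)
end

section
/- In the group ⟨C₁, C₃, C₅, C₇ | C₇ = C₁⁻¹C₅C₃⁻¹C₁⁻¹, C₅ = C₁C₃C₁⁻¹C₃, C₃⁻¹C₁C₃⁻¹ = C₁⁻², C₃ = C₁⁸⟩, the element C₁ satisfies C₁¹³ = 1, and the group is cyclic of order dividing 13. -/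
/-!
Substituting `C₃ = C₁⁸` into `C₃⁻¹C₁C₃⁻¹ = C₁⁻²` gives `C₁⁻¹⁵ = C₁⁻²`, i.e. `C₁¹³ = 1`.
The other two relations then express `C₅ = C₁¹⁶` and `C₇ = C₁⁶`, so `C₁` generates the group,
which is therefore cyclic of order dividing `13`.
-/

namespace PresentedGroup

variable {α : Type*} {rels : Set (FreeGroup α)}

theorem zpowers_eq_top_of_forall_of_mem {g : PresentedGroup rels}
    (h : ∀ i, of i ∈ Subgroup.zpowers g) : Subgroup.zpowers g = ⊤ :=
  eq_top_iff.2 fun x _ => generated_by rels _ h x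

end PresentedGroup

theorem isCyclic_and_card_dvd_of_zpowers_eq_top {G : Type*} [Group G] {g : G} {n : ℕ}
    (htop : Subgroup.zpowers g = ⊤) (hn : g ^ n = 1) : IsCyclic G ∧ Nat.card G ∣ n :=
  ⟨isCyclic_iff_exists_zpowers_eq_top.2 ⟨g, htop⟩,
    orderOf_eq_card_of_zpowers_eq_top htop ▸ orderOf_dvd_of_pow_eq_one hn⟩

theorem zpow_two_mul_sub_three_eq_one {G : Type*} [Group G] {a : G} {k : ℤ}
    (h : (a ^ k)⁻¹ * a * (a ^ k)⁻¹ = (a ^ 2)⁻¹) : a ^ (2 * k - 3) = 1 := by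
  have : a ^ (2 * k - 3) = ((a ^ k)⁻¹ * a * (a ^ k)⁻¹)⁻¹ * (a ^ 2)⁻¹ := by group
  rw [this, h, inv_inv, mul_inv_cancel]

-- Generators: `0 ↦ C₁`, `1 ↦ C₃`, `2 ↦ C₅`, `3 ↦ C₇`.
open FreeGroup in
/-- In `⟨C₁, C₃, C₅, C₇ | C₇ = C₁⁻¹C₅C₃⁻¹C₁⁻¹, C₅ = C₁C₃C₁⁻¹C₃, C₃⁻¹C₁C₃⁻¹ = C₁⁻²,
C₃ = C₁⁸⟩`, the element `C₁` satisfies `C₁¹³ = 1` and the group is cyclic of order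
dividing 13.  (Generators: 0↦C₁, 1↦C₃, 2↦C₅, 3↦C₇.) -/
theorem stmt_19 (rels : Set (FreeGroup (Fin 4)))
    (hrels : rels = {
      of 3 * ((of 0)⁻¹ * of 2 * (of 1)⁻¹ * (of 0)⁻¹)⁻¹,
      of 2 * (of 0 * of 1 * (of 0)⁻¹ * of 1)⁻¹,
      (of 1)⁻¹ * of 0 * (of 1)⁻¹ * (of 0)^2,
      of 1 * ((of 0)^8)⁻¹ }) :
    (PresentedGroup.of (rels := rels) 0) ^ 13 = 1 ∧
      IsCyclic (PresentedGroup rels) ∧ Nat.card (PresentedGroup rels) ∣ 13 := by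
  set a : PresentedGroup rels := .of 0
  set b : PresentedGroup rels := .of 1
  set c : PresentedGroup rels := .of 2
  set d : PresentedGroup rels := .of 3
  -- `PresentedGroup.mk` is a quotient map, so it commutes with `*`, `⁻¹` and `^` by `rfl`.
  have hd : d = a⁻¹ * c * b⁻¹ * a⁻¹ :=
    PresentedGroup.mk_eq_mk_of_mul_inv_mem (y := (of 0)⁻¹ * of 2 * (of 1)⁻¹ * (of 0)⁻¹)
      (by simp [hrels])
  have hc : c = a * b * a⁻¹ * b :=
    PresentedGroup.mk_eq_mk_of_mul_inv_mem (y := of 0 * of 1 * (of 0)⁻¹ * of 1) (by simp [hrels])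
  have hab : b⁻¹ * a * b⁻¹ = (a ^ 2)⁻¹ :=
    PresentedGroup.mk_eq_mk_of_mul_inv_mem (x := (of 1)⁻¹ * of 0 * (of 1)⁻¹)
      (y := ((of 0) ^ 2)⁻¹) (by simp [hrels])
  have hb : b = a ^ 8 :=
    PresentedGroup.mk_eq_mk_of_mul_inv_mem (y := (of 0) ^ 8) (by simp [hrels])
  have ha : a ^ 13 = 1 := by
    have := zpow_two_mul_sub_three_eq_one (a := a) (k := 8) (by rwa [zpow_ofNat, ← hb])
    norm_num at this
    exact this
  have htop : Subgroup.zpowers a = ⊤ := by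
    refine PresentedGroup.zpowers_eq_top_of_forall_of_mem fun i => ?_
    fin_cases i
    exacts [⟨1, zpow_one a⟩, ⟨8, by simp [b, hb]⟩, ⟨16, by simp [c, hc, hb]; group⟩,
      ⟨6, by simp [d, hd, hc, hb]; group⟩]
  exact ⟨ha, isCyclic_and_card_dvd_of_zpowers_eq_top htop ha⟩
end
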